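/- The dual icosahedral code generated by G = [[0,0,1,1,φ,φ],[1,1,φ,−φ,0,0],[φ,−φ,0,0,1,−1]] with φ = (1+√5)/2 has 1-height and 2-height both equal to √5, and 3-height equal to 2+√5, where the m-height is the supremum over nonzero codewords c = uG (u ∈ ℝ³) of the ratio of the largest to the (m+1)-th largest entry of (|c_1|,...,|c_6|). -/

import Mathlib

/-- The `k`-th largest (0-indexed) of the magnitudes `|c 0|, …, |c 5|`,
obtained via the sorting permutation `Tuple.sort` (which sorts nondecreasingly,
so the largest magnitude sits at the last position). -/
noncomputable def kthLargestAbs (c : Fin 6 → ℝ) (k : Fin 6) : ℝ :=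
  |c (Tuple.sort (fun i => |c i|) k.rev)|

noncomputable def goldenRatio' : ℝ := (1 + Real.sqrt 5) / 2

/-- Generator matrix of the dual icosahedral code. -/
noncomputable def Gico : Matrix (Fin 3) (Fin 6) ℝ :=
  !![0, 0, 1, 1, goldenRatio', goldenRatio';
     1, 1, goldenRatio', -goldenRatio', 0, 0;
     goldenRatio', -goldenRatio', 0, 0, 1, -1]

/-- The codeword `uG` associated with an information vector `u : ℝ³`. -/
noncomputable def icoCodeword (u : Fin 3 → ℝ) : Fin 6 → ℝ :=
  fun j => u 0 * Gico 0 j + u 1 * Gico 1 j + u 2 * Gico 2 j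

/-- The `m`-height of the dual icosahedral code: the supremum over nonzero
information vectors of the ratio of the largest to the `(m+1)`-th largest
magnitude of the codeword entries. -/
noncomputable def icoHeight (m : Fin 6) : ℝ :=
  sSup {h : ℝ | ∃ u : Fin 3 → ℝ, u ≠ 0 ∧
    h = kthLargestAbs (icoCodeword u) 0 / kthLargestAbs (icoCodeword u) m}

/-!
Write `(x, y, z) = (|u 0|, |u 1|, |u 2|)`. The six entries of `uG` come in pairs `s ± r`, and the
magnitudes of such a pair are `|s| + |r|` and `||s| - |r||`; so the magnitudes are the sums
`P₁ = x + φy, P₂ = y + φz, P₃ = z + φx` and the differences `D₁ = |x - φy|, D₂, D₃`, a list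
that the cyclic shift of `(x, y, z)` only rotates. Assuming `P₁` is the largest entry, elementary
inequalities using `φ² = φ + 1` show that at least three entries are `≥ P₁ / √5` and at least four
are `≥ P₁ / (2 + √5)`. Since the `m`-th largest entry is `≥ t` exactly when at least `m + 1`
entries are, this bounds the heights, and `u = (0, φ - 1, 1)` (magnitudes `√5, 1, 1, 1, 1, 1`)
and `u = (1, 1, -1)` (magnitudes `φ ± 1`, three of each) attain the bounds.
-/

open Real goldenRatio Finset

theorem Monotone.apply_sort_rev_iff {n : ℕ} {α : Type*} [LinearOrder α] {P : α → Prop}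
    [DecidablePred P] (hP : Monotone P) (f : Fin n → α) (m : Fin n) :
    P (f (Tuple.sort f m.rev)) ↔ m.val + 1 ≤ #{i | P (f i)} := by
  set σ := Tuple.sort f
  have hcard : #{i | P (f i)} = #{j | P (f (σ j))} := card_equiv σ.symm (by simp)
  have hup : ∀ {j k}, j ≤ k → P (f (σ j)) → P (f (σ k)) := fun hjk =>
    hP (Tuple.monotone_sort f hjk)
  rw [hcard]
  constructor
  · intro h
    calc m.val + 1 = #(Ici m.rev) := by simp only [Fin.card_Ici, Fin.val_rev]; omega
      _ ≤ _ := card_le_card fun j hj => by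
        simp only [mem_Ici, mem_filter, mem_univ, true_and] at hj ⊢
        exact hup hj h
  · intro h
    by_contra h'
    have : #{j | P (f (σ j))} ≤ #(Ioi m.rev) := card_le_card fun j hj => by
      simp only [mem_filter, mem_univ, true_and, mem_Ioi] at hj ⊢
      by_contra hle
      exact h' (hup (not_lt.mp hle) hj)
    simp only [Fin.card_Ioi, Fin.val_rev] at this
    omega

theorem Fin.card_filter_eq_countP_ofFn {n : ℕ} {α : Type*} (f : Fin n → α) (P : α → Prop)
    [DecidablePred P] : #{i | P (f i)} = (List.ofFn f).countP (P ·) := by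
  rw [← Multiset.coe_countP, ← Fin.univ_val_map, Multiset.countP_map]
  rfl

theorem List.perm_abs_add_abs_sub (s r : ℝ) :
    [|s + r|, |s - r|].Perm [|s| + |r|, |(|s| - |r|)|] := by
  rcases le_total 0 s with hs | hs <;> rcases le_total 0 r with hr | hr
  · rw [abs_of_nonneg hs, abs_of_nonneg hr, abs_of_nonneg (add_nonneg hs hr)]
  · rw [abs_of_nonneg hs, abs_of_nonpos hr, abs_of_nonneg (by linarith : 0 ≤ s - r),
      sub_neg_eq_add]
    exact .swap ..
  · rw [abs_of_nonpos hs, abs_of_nonneg hr, abs_of_nonpos (by linarith : s - r ≤ 0), ← neg_add',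
      abs_neg, neg_sub, sub_eq_neg_add]
    exact .swap ..
  · rw [abs_of_nonpos hs, abs_of_nonpos hr, abs_of_nonpos (add_nonpos hs hr), neg_sub_neg,
      neg_add', abs_sub_comm, sub_eq_add_neg]

section kthLargestAbs

variable (c : Fin 6 → ℝ)

theorem Monotone.apply_kthLargestAbs_iff {P : ℝ → Prop} [DecidablePred P] (hP : Monotone P)
    (m : Fin 6) : P (kthLargestAbs c m) ↔ m.val + 1 ≤ #{i | P |c i|} :=
  hP.apply_sort_rev_iff (fun i => |c i|) m

theorem abs_le_kthLargestAbs_zero (i : Fin 6) : |c i| ≤ kthLargestAbs c 0 :=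
  (monotone_le.apply_kthLargestAbs_iff c 0).mpr (card_pos.mpr ⟨i, by simp⟩)

variable {c}

theorem kthLargestAbs_eq_of_forall_le {t : ℝ} {m : Fin 6} (ht : ∀ i, t ≤ |c i|)
    (hcard : #{i | t < |c i|} ≤ m) : kthLargestAbs c m = t := by
  refine le_antisymm (not_lt.mp fun h => ?_) ?_
  · have := (monotone_lt.apply_kthLargestAbs_iff c m).mp h
    omega
  · refine (monotone_le.apply_kthLargestAbs_iff c m).mpr ?_
    rw [filter_true_of_mem fun i _ => ht i]
    simp

end kthLargestAbs

theorem goldenRatio'_eq : goldenRatio' = φ := by rw [goldenRatio', goldenRatio]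

theorem sqrt_five_eq_two_mul_goldenRatio_sub_one : √5 = 2 * φ - 1 := by rw [goldenRatio]; ring

theorem icoCodeword_eq (u : Fin 3 → ℝ) : icoCodeword u =
    ![u 1 + φ * u 2, u 1 - φ * u 2, u 0 + φ * u 1, u 0 - φ * u 1,
      φ * u 0 + u 2, φ * u 0 - u 2] := by
  ext j
  fin_cases j <;> simp [icoCodeword, Gico, goldenRatio'_eq] <;> ring

noncomputable def icoProfile (x y z : ℝ) : List ℝ :=
  [x + φ * y, |x - φ * y|, y + φ * z, |y - φ * z|, z + φ * x, |z - φ * x|]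

theorem perm_icoProfile (u : Fin 3 → ℝ) :
    (List.ofFn fun i => |icoCodeword u i|).Perm (icoProfile |u 0| |u 1| |u 2|) := by
  have hφ : ∀ a : ℝ, |φ * a| = φ * |a| := fun a => by rw [abs_mul, abs_of_pos goldenRatio_pos]
  have h₁ := List.perm_abs_add_abs_sub (u 1) (φ * u 2)
  have h₂ := List.perm_abs_add_abs_sub (u 0) (φ * u 1)
  have h₃ := List.perm_abs_add_abs_sub (u 2) (φ * u 0)
  rw [hφ] at h₁ h₂ h₃
  rw [add_comm, abs_sub_comm] at h₃
  simp only [icoCodeword_eq, List.ofFn_succ, List.ofFn_zero]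
  exact ((h₁.append h₂).trans List.perm_append_comm).append h₃

theorem icoProfile_wlog {Φ : List ℝ → Prop} (hΦ : ∀ {l l' : List ℝ}, l.Perm l' → Φ l → Φ l')
    (h : ∀ {x y z : ℝ}, 0 ≤ x → 0 ≤ y → 0 ≤ z → y + φ * z ≤ x + φ * y →
      z + φ * x ≤ x + φ * y → Φ (icoProfile x y z))
    {x y z : ℝ} (hx : 0 ≤ x) (hy : 0 ≤ y) (hz : 0 ≤ z) : Φ (icoProfile x y z) := by
  have hrot : ∀ x y z, (icoProfile y z x).Perm (icoProfile x y z) := fun x y z =>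
    List.rotate_perm (icoProfile x y z) 2
  rcases le_total (y + φ * z) (x + φ * y) with h₁₂ | h₂₁
  · rcases le_total (z + φ * x) (x + φ * y) with h₁₃ | h₃₁
    · exact h hx hy hz h₁₂ h₁₃
    · exact hΦ ((hrot y z x).trans (hrot x y z)) (h hz hx hy h₃₁ (by linarith))
  · rcases le_total (z + φ * x) (y + φ * z) with h₂₃ | h₃₂
    · exact hΦ (hrot x y z) (h hy hz hx h₂₃ h₂₁)
    · exact hΦ ((hrot y z x).trans (hrot x y z)) (h hz hx hy (by linarith) h₃₂)

theorem le_of_mem_icoProfile {x y z : ℝ} (hx : 0 ≤ x) (hy : 0 ≤ y) (hz : 0 ≤ z)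
    (hyz : y + φ * z ≤ x + φ * y) (hzx : z + φ * x ≤ x + φ * y) :
    ∀ v ∈ icoProfile x y z, v ≤ x + φ * y := by
  have hD : ∀ {a b : ℝ}, 0 ≤ a → 0 ≤ b → |a - φ * b| ≤ a + φ * b := fun ha hb =>
    abs_sub_le_iff.mpr ⟨by nlinarith [goldenRatio_pos], by nlinarith [goldenRatio_pos]⟩
  simp only [icoProfile, List.mem_cons, List.not_mem_nil, or_false]
  rintro v (rfl | rfl | rfl | rfl | rfl | rfl)
  exacts [le_rfl, hD hx hy, hyz, (hD hy hz).trans hyz, hzx, (hD hz hx).trans hzx]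

theorem three_le_countP_icoProfile {x y z : ℝ} (hx : 0 ≤ x) (hy : 0 ≤ y) (hz : 0 ≤ z)
    (hzx : z + φ * x ≤ x + φ * y) :
    3 ≤ (icoProfile x y z).countP (fun v => x + φ * y ≤ √5 * v) := by
  have := goldenRatio_sq; have := one_lt_goldenRatio
  rw [sqrt_five_eq_two_mul_goldenRatio_sub_one]
  have hP₁ : x + φ * y ≤ (2 * φ - 1) * (x + φ * y) := by nlinarith
  by_cases hD₁ : x + φ * y ≤ (2 * φ - 1) * |x - φ * y|
  · have hP₂ : x + φ * y ≤ (2 * φ - 1) * (y + φ * z) := by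
      rcases abs_cases (x - φ * y) with ⟨h, _⟩ | ⟨h, _⟩ <;> rw [h] at hD₁ <;> nlinarith
    simp only [icoProfile, List.countP_cons, List.countP_nil, hP₁, hD₁, hP₂, decide_true, if_true]
    omega
  by_cases hD₃ : x + φ * y ≤ (2 * φ - 1) * |z - φ * x|
  · have hP₃ : x + φ * y ≤ (2 * φ - 1) * (z + φ * x) := by
      rcases abs_cases (z - φ * x) with ⟨h, _⟩ | ⟨h, _⟩ <;> rw [h] at hD₃ <;> nlinarith
    simp only [icoProfile, List.countP_cons, List.countP_nil, hP₁, hD₃, hP₃, decide_true, if_true]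
    omega
  rw [not_le] at hD₁ hD₃
  have hP₂ : x + φ * y ≤ (2 * φ - 1) * (y + φ * z) := by
    rcases abs_cases (x - φ * y) with ⟨h, _⟩ | ⟨h, _⟩ <;> rw [h] at hD₁ <;>
    rcases abs_cases (z - φ * x) with ⟨h', _⟩ | ⟨h', _⟩ <;> rw [h'] at hD₃ <;> nlinarith
  have hP₃ : x + φ * y ≤ (2 * φ - 1) * (z + φ * x) := by
    rcases abs_cases (x - φ * y) with ⟨h, _⟩ | ⟨h, _⟩ <;> rw [h] at hD₁ <;> nlinarith
  simp only [icoProfile, List.countP_cons, List.countP_nil, hP₁, hP₂, hP₃, decide_true, if_true]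
  omega

theorem four_le_countP_icoProfile {x y z : ℝ} (hx : 0 ≤ x) (hy : 0 ≤ y) (hz : 0 ≤ z)
    (hzx : z + φ * x ≤ x + φ * y) :
    4 ≤ (icoProfile x y z).countP (fun v => x + φ * y ≤ (2 + √5) * v) := by
  have := goldenRatio_sq; have := one_lt_goldenRatio
  rw [sqrt_five_eq_two_mul_goldenRatio_sub_one, show 2 + (2 * φ - 1) = 2 * φ + 1 by ring]
  have hP₁ : x + φ * y ≤ (2 * φ + 1) * (x + φ * y) := by nlinarith
  have hP₂ : x + φ * y ≤ (2 * φ + 1) * (y + φ * z) := by nlinarith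
  by_cases hD₁ : x + φ * y ≤ (2 * φ + 1) * |x - φ * y|
  · by_cases hP₃ : x + φ * y ≤ (2 * φ + 1) * (z + φ * x)
    · simp only [icoProfile, List.countP_cons, List.countP_nil, hP₁, hD₁, hP₂, hP₃, decide_true,
        if_true]
      omega
    · have hD₂ : x + φ * y ≤ (2 * φ + 1) * |y - φ * z| := by
        rcases abs_cases (y - φ * z) with ⟨h, _⟩ | ⟨h, _⟩ <;> rw [h] <;> nlinarith
      simp only [icoProfile, List.countP_cons, List.countP_nil, hP₁, hD₁, hP₂, hD₂, decide_true,
        if_true]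
      omega
  · rw [not_le] at hD₁
    have hD₃ : x + φ * y ≤ (2 * φ + 1) * |z - φ * x| := by
      rcases abs_cases (x - φ * y) with ⟨h, _⟩ | ⟨h, _⟩ <;> rw [h] at hD₁ <;>
      rcases abs_cases (z - φ * x) with ⟨h', _⟩ | ⟨h', _⟩ <;> rw [h'] <;> nlinarith
    have hP₃ : x + φ * y ≤ (2 * φ + 1) * (z + φ * x) := by
      rcases abs_cases (z - φ * x) with ⟨h, _⟩ | ⟨h, _⟩ <;> rw [h] at hD₃ <;> nlinarith
    simp only [icoProfile, List.countP_cons, List.countP_nil, hP₁, hP₂, hP₃, hD₃, decide_true,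
      if_true]
    omega

theorem le_countP_icoProfile {K : ℝ} {k : ℕ}
    (h : ∀ {x y z : ℝ}, 0 ≤ x → 0 ≤ y → 0 ≤ z → y + φ * z ≤ x + φ * y →
      z + φ * x ≤ x + φ * y → k ≤ (icoProfile x y z).countP (fun v => x + φ * y ≤ K * v))
    {x y z : ℝ} (hx : 0 ≤ x) (hy : 0 ≤ y) (hz : 0 ≤ z) :
    ∀ v ∈ icoProfile x y z, k ≤ (icoProfile x y z).countP (fun w => v ≤ K * w) := by
  refine icoProfile_wlog (Φ := fun l => ∀ v ∈ l, k ≤ l.countP (fun w => v ≤ K * w))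
    (fun hl hΦ v hv => hl.countP_eq _ ▸ hΦ v (hl.mem_iff.mpr hv)) ?_ hx hy hz
  intro x y z hx hy hz hyz hzx v hv
  have hvM := le_of_mem_icoProfile hx hy hz hyz hzx v hv
  refine (h hx hy hz hyz hzx).trans (List.countP_mono_left fun w _ hw => ?_)
  simp only [decide_eq_true_eq] at hw ⊢
  exact hvM.trans hw

theorem kthLargestAbs_icoCodeword_zero_le_mul {K : ℝ} {m : Fin 6} (hK : 0 ≤ K)
    (h : ∀ {x y z : ℝ}, 0 ≤ x → 0 ≤ y → 0 ≤ z → y + φ * z ≤ x + φ * y →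
      z + φ * x ≤ x + φ * y → m.val + 1 ≤ (icoProfile x y z).countP (fun v => x + φ * y ≤ K * v))
    (u : Fin 3 → ℝ) :
    kthLargestAbs (icoCodeword u) 0 ≤ K * kthLargestAbs (icoCodeword u) m := by
  have hmono : Monotone (kthLargestAbs (icoCodeword u) 0 ≤ K * ·) :=
    monotone_le.comp (monotone_mul_left_of_nonneg hK)
  rw [hmono.apply_kthLargestAbs_iff, Fin.card_filter_eq_countP_ofFn (fun i => |icoCodeword u i|)
      (kthLargestAbs (icoCodeword u) 0 ≤ K * ·),
    (perm_icoProfile u).countP_eq]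
  exact le_countP_icoProfile h (abs_nonneg _) (abs_nonneg _) (abs_nonneg _) _
    ((perm_icoProfile u).subset (List.mem_ofFn.mpr ⟨_, rfl⟩))

theorem icoHeight_eq_of_forall_le_mul {m : Fin 6} {K : ℝ} (hK : 0 ≤ K)
    (hle : ∀ u, kthLargestAbs (icoCodeword u) 0 ≤ K * kthLargestAbs (icoCodeword u) m)
    {u : Fin 3 → ℝ} (hu : u ≠ 0) (hpos : 0 < kthLargestAbs (icoCodeword u) m)
    (hge : K * kthLargestAbs (icoCodeword u) m ≤ kthLargestAbs (icoCodeword u) 0) :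
    icoHeight m = K := by
  refine IsGreatest.csSup_eq ⟨⟨u, hu, ?_⟩, ?_⟩
  · exact (eq_div_iff hpos.ne').mpr (le_antisymm hge (hle u))
  · rintro _ ⟨v, -, rfl⟩
    exact div_le_of_le_mul₀ (abs_nonneg _) hK (hle v)

theorem abs_icoCodeword_icosahedronVertex :
    (fun i => |icoCodeword ![0, φ - 1, 1] i|) = ![√5, 1, 1, 1, 1, 1] := by
  have h : φ * (φ - 1) = 1 := by linear_combination goldenRatio_sq
  have h' : φ - 1 + φ = √5 := by rw [sqrt_five_eq_two_mul_goldenRatio_sub_one]; ring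
  ext i
  fin_cases i <;> simp [icoCodeword_eq, h, h']

theorem icoHeight_eq_sqrt_five {m : Fin 6} (hm₁ : 1 ≤ m) (hm₂ : m ≤ 2) : icoHeight m = √5 := by
  have hc := congrFun abs_icoCodeword_icosahedronVertex
  have h₁ : (1 : ℝ) < √5 := by rw [lt_sqrt zero_le_one]; norm_num
  have hm : kthLargestAbs (icoCodeword ![0, φ - 1, 1]) m = 1 := by
    refine kthLargestAbs_eq_of_forall_le (fun i => ?_) ?_
    · rw [hc]
      fin_cases i <;> simp [h₁.le]
    · have hcount : #{i | 1 < |icoCodeword ![0, φ - 1, 1] i|} = 1 := by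
        simp only [hc]
        rw [Fin.card_filter_eq_countP_ofFn]
        simp [List.ofFn_succ, h₁]
      omega
  refine icoHeight_eq_of_forall_le_mul (u := ![0, φ - 1, 1]) (sqrt_nonneg 5)
    (kthLargestAbs_icoCodeword_zero_le_mul (sqrt_nonneg 5) fun hx hy hz _ hzx =>
      le_trans (by omega) (three_le_countP_icoProfile hx hy hz hzx))
    (fun h => by simpa using congrFun h 2) (by rw [hm]; exact one_pos) ?_
  rw [hm, mul_one]
  simpa [hc] using abs_le_kthLargestAbs_zero (icoCodeword ![0, φ - 1, 1]) 0

theorem abs_icoCodeword_dodecahedronVertex :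
    (fun i => |icoCodeword ![1, 1, -1] i|) = ![φ - 1, φ + 1, φ + 1, φ - 1, φ - 1, φ + 1] := by
  have h₁ : 1 < φ := one_lt_goldenRatio
  ext i
  fin_cases i <;> simp [icoCodeword_eq] <;>
    first
    | linarith
    | rw [abs_of_pos (by linarith)]; ring
    | rw [abs_of_neg (by linarith)]; ring

theorem icoHeight_three : icoHeight 3 = 2 + √5 := by
  have hc := congrFun abs_icoCodeword_dodecahedronVertex
  have h₁ : 1 < φ := one_lt_goldenRatio
  have h₃ : kthLargestAbs (icoCodeword ![1, 1, -1]) 3 = φ - 1 := by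
    refine kthLargestAbs_eq_of_forall_le (fun i => ?_) ?_
    · rw [hc]
      fin_cases i <;> simp <;> linarith
    · have hcount : #{i | φ - 1 < |icoCodeword ![1, 1, -1] i|} = 3 := by
        simp only [hc]
        rw [Fin.card_filter_eq_countP_ofFn]
        simp [List.ofFn_succ, show φ - 1 < φ + 1 by linarith]
      omega
  refine icoHeight_eq_of_forall_le_mul (u := ![1, 1, -1]) (by positivity)
    (kthLargestAbs_icoCodeword_zero_le_mul (by positivity) fun hx hy hz _ hzx =>
      four_le_countP_icoProfile hx hy hz hzx)
    (fun h => by simpa using congrFun h 0) (by rw [h₃]; linarith) ?_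
  rw [h₃, sqrt_five_eq_two_mul_goldenRatio_sub_one,
    show (2 + (2 * φ - 1)) * (φ - 1) = φ + 1 by linear_combination 2 * goldenRatio_sq]
  simpa [hc] using abs_le_kthLargestAbs_zero (icoCodeword ![1, 1, -1]) 1

theorem stmt_13 :
    icoHeight 1 = Real.sqrt 5 ∧ icoHeight 2 = Real.sqrt 5 ∧
      icoHeight 3 = 2 + Real.sqrt 5 :=
  ⟨icoHeight_eq_sqrt_five le_rfl (by decide), icoHeight_eq_sqrt_five (by decide) le_rfl,
    icoHeight_three⟩
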